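/- arXiv:2101.03338 — 5 statements merged into one kernel-verified Lean document; each statement's English description precedes it below -/
import Mathlib

section
/- Let $q > 1$ be a real number (e.g. $q+1$ the degree of a finite $(q+1)$-regular graph on $n$ vertices) and let $A$ be the adjacency matrix of a finite $(q+1)$-regular simple graph, with real eigenvalues $\lambda_1, \dots, \lambda_n$ (so $|\lambda_j| \le q+1$ for all $j$). Then the following are equivalent: (i) every $u \in \mathbb{C}$ with $1/q < |u| < 1$ and $\det\big((1+qu^2)I - uA\big) = 0$ satisfies $|u| = 1/\sqrt{q}$; (ii) every eigenvalue $\lambda_j$ with $|\lambda_j| \ne q+1$ satisfies $|\lambda_j| \le 2\sqrt{q}$. -/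
/-!
By the spectral theorem, `det((1 + q u²) I - u A) = ∏ⱼ (1 + q u² - λⱼ u)`, so the question is
about the roots of one real quadratic `1 - λ u + q u²` at a time, whose roots have product `1/q`.
If `|λ| ≤ 2√q` its roots are either non-real and conjugate, or a real double root, and both lie on
`|u| = 1/√q`. If `|λ| = q + 1` its roots are `±1` and `±1/q`, outside the open annulus. If
`2√q < |λ| < q + 1` both roots are real, and the one of larger absolute value has absolute value
strictly between `1/√q` and `1`.
-/

open Matrix in
theorem Matrix.IsHermitian.det_smul_one_sub_smul_map_ofReal {ι : Type*} [Fintype ι]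
    [DecidableEq ι] {A : Matrix ι ι ℝ} (hA : A.IsHermitian) (c u : ℂ) :
    (c • (1 : Matrix ι ι ℂ) - u • A.map (fun x : ℝ => (x : ℂ))).det
      = ∏ i, (c - u * (hA.eigenvalues i : ℂ)) := by
  set φ := (Complex.ofRealHom : ℝ →+* ℂ).mapMatrix (m := ι)
  set U : Matrix ι ι ℝ := (hA.eigenvectorUnitary : Matrix ι ι ℝ)
  have hUU : φ U * φ (star U) = 1 := by
    rw [← map_mul, Unitary.mul_star_self_of_mem hA.eigenvectorUnitary.2, map_one]
  have hUU' : φ (star U) * φ U = 1 := by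
    rw [← map_mul, Unitary.star_mul_self_of_mem hA.eigenvectorUnitary.2, map_one]
  have hconj : c • (1 : Matrix ι ι ℂ) - u • A.map (fun x : ℝ => (x : ℂ))
      = φ U * diagonal (fun i => c - u * (hA.eigenvalues i : ℂ)) * φ (star U) := by
    have hdiag : diagonal (fun i => c - u * (hA.eigenvalues i : ℂ))
        = c • 1 - u • φ (diagonal (RCLike.ofReal ∘ hA.eigenvalues)) := by
      ext i j
      by_cases h : i = j <;> simp [φ, h]
    have hA' : A.map (fun x : ℝ => (x : ℂ)) = φ A := rfl
    rw [hdiag, Matrix.mul_sub, Matrix.sub_mul, Matrix.mul_smul, Matrix.mul_one, Matrix.smul_mul,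
      hUU, Matrix.mul_smul, Matrix.smul_mul, ← map_mul, ← map_mul]
    conv_lhs => rw [hA', hA.spectral_theorem]
    rfl
  rw [hconj, det_conj_of_mul_eq_one hUU hUU', det_diagonal]

theorem SimpleGraph.abs_eigenvalue_le_of_isRegularOfDegree {V : Type*} [Fintype V]
    [DecidableEq V] {G : SimpleGraph V} [DecidableRel G.Adj] {d : ℕ}
    (hreg : G.IsRegularOfDegree d) (hA : (G.adjMatrix ℝ).IsHermitian) (i : V) :
    |hA.eigenvalues i| ≤ d := by
  have hev : Module.End.HasEigenvalue (Matrix.toLin' (G.adjMatrix ℝ)) (hA.eigenvalues i) := by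
    rw [Module.End.hasEigenvalue_iff_mem_spectrum, Matrix.spectrum_toLin']
    exact hA.eigenvalues_mem_spectrum_real i
  obtain ⟨k, hk⟩ := eigenvalue_mem_ball hev
  have hrow : ∑ j ∈ Finset.univ.erase k, ‖G.adjMatrix ℝ k j‖ = d := by
    rw [Finset.sum_erase _ (by simp)]
    simp [apply_ite, ← hreg k, ← G.card_neighborFinset_eq_degree, G.neighborFinset_eq_filter]
  rw [hrow] at hk
  simpa [Real.dist_eq] using hk

section IharaQuadratic

open Complex ComplexConjugate

variable {q l : ℝ}

theorem abs_eq_inv_sqrt_of_root_of_abs_le (hq : 0 < q) (hl : |l| ≤ 2 * √q) {x : ℝ}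
    (hx : 1 + q * x ^ 2 - x * l = 0) : |x| = 1 / √q := by
  have hsq : (√q * |x| - 1) ^ 2 ≤ 0 :=
    calc (√q * |x| - 1) ^ 2 = x * l - 2 * √q * |x| := by
          rw [sub_sq, mul_pow, Real.sq_sqrt hq.le, sq_abs]; linarith
      _ ≤ |x| * |l| - 2 * √q * |x| := by
          rw [← abs_mul]; linarith [le_abs_self (x * l)]
      _ ≤ 0 := by nlinarith [abs_nonneg x]
  have hone : √q * |x| = 1 := by nlinarith [sq_nonneg (√q * |x| - 1)]
  rw [eq_div_iff (Real.sqrt_pos.2 hq).ne']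
  linarith

theorem norm_eq_inv_sqrt_of_root_of_conj_ne {u : ℂ}
    (hu : 1 + q * u ^ 2 - u * l = 0) (hne : conj u ≠ u) : ‖u‖ = 1 / √q := by
  have hconj : 1 + q * conj u ^ 2 - conj u * l = 0 := by
    simpa using congrArg conj hu
  -- `u` and `conj u` are the two distinct roots, so Vieta gives `q * u * conj u = 1`.
  have hsum : (l : ℂ) = q * (u + conj u) := by
    have : (u - conj u) * (q * (u + conj u) - l) = 0 := by linear_combination hu - hconj
    exact (sub_eq_zero.1 ((mul_eq_zero.1 this).resolve_left (sub_ne_zero.2 hne.symm))).symm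
  have hprod : (q : ℂ) * normSq u = 1 := by
    rw [← mul_conj]
    linear_combination -hu - u * hsum
  have hnormSq : normSq u = q⁻¹ := (inv_eq_of_mul_eq_one_right (by exact_mod_cast hprod)).symm
  rw [norm_def, hnormSq, Real.sqrt_inv, one_div]

theorem norm_eq_inv_sqrt_of_root_of_abs_le (hq : 0 < q) (hl : |l| ≤ 2 * √q) {u : ℂ}
    (hu : 1 + q * u ^ 2 - u * l = 0) : ‖u‖ = 1 / √q := by
  by_cases hreal : conj u = u
  · obtain ⟨x, rfl⟩ := conj_eq_iff_real.1 hreal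
    rw [norm_real, Real.norm_eq_abs]
    exact abs_eq_inv_sqrt_of_root_of_abs_le hq hl (by exact_mod_cast hu)
  · exact norm_eq_inv_sqrt_of_root_of_conj_ne hu hreal

theorem norm_eq_one_or_inv_of_root_of_abs_eq (hq : 0 < q) (hl : |l| = q + 1) {u : ℂ}
    (hu : 1 + q * u ^ 2 - u * l = 0) : ‖u‖ = 1 ∨ ‖u‖ = 1 / q := by
  obtain ⟨s, hs, rfl⟩ : ∃ s : ℝ, |s| = 1 ∧ l = s * (q + 1) :=
    ⟨l / (q + 1), by rw [abs_div, hl, abs_of_pos (by linarith), div_self (by linarith)],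
      by field_simp⟩
  have hs2 : (s : ℂ) ^ 2 = 1 := by exact_mod_cast (sq_abs s).symm.trans (by rw [hs, one_pow])
  have hfac : (u - s) * (q * u - s) = 0 := by push_cast at hu; linear_combination hu + hs2
  rcases mul_eq_zero.1 hfac with h | h
  · left
    rw [sub_eq_zero.1 h, norm_real, Real.norm_eq_abs, hs]
  · right
    have : q * ‖u‖ = 1 := by
      rw [← abs_of_pos hq, ← Real.norm_eq_abs, ← norm_real, ← norm_mul, sub_eq_zero.1 h,
        norm_real, Real.norm_eq_abs, hs]
    rw [eq_div_iff hq.ne', mul_comm, this]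

theorem exists_pos_root_of_two_sqrt_lt (hq : 1 < q) (h₁ : 2 * √q < l) (h₂ : l < q + 1) :
    ∃ x : ℝ, 1 / √q < x ∧ x < 1 ∧ 1 + q * x ^ 2 - x * l = 0 := by
  have hq0 : 0 < q := by linarith
  have hsq : √q * √q = q := Real.mul_self_sqrt hq0.le
  have hsq0 : 0 < √q := Real.sqrt_pos.2 hq0
  have hdisc : 0 ≤ l ^ 2 - 4 * q := by nlinarith
  set s := √(l ^ 2 - 4 * q)
  have hs2 : s ^ 2 = l ^ 2 - 4 * q := Real.sq_sqrt hdisc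
  have hs0 : 0 ≤ s := Real.sqrt_nonneg _
  -- the larger root of `q x ^ 2 - l x + 1`
  refine ⟨(l + s) / (2 * q), ?_, ?_, ?_⟩
  · rw [div_lt_div_iff₀ hsq0 (by positivity)]
    nlinarith
  · rw [div_lt_one (by positivity)]
    have : s < 2 * q - l := by
      rw [Real.sqrt_lt' (by nlinarith)]
      nlinarith
    linarith
  · field_simp
    nlinarith

theorem exists_root_of_two_sqrt_lt_abs (hq : 1 < q) (h₁ : 2 * √q < |l|) (h₂ : |l| < q + 1) :
    ∃ x : ℝ, 1 / √q < |x| ∧ |x| < 1 ∧ 1 + q * x ^ 2 - x * l = 0 := by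
  obtain ⟨x, hx₁, hx₂, hx⟩ := exists_pos_root_of_two_sqrt_lt hq h₁ h₂
  have hx0 : 0 < x := lt_trans (by positivity) hx₁
  rcases abs_choice l with hl | hl
  · exact ⟨x, by rwa [abs_of_pos hx0], by rwa [abs_of_pos hx0], by rwa [hl] at hx⟩
  · refine ⟨-x, by rwa [abs_neg, abs_of_pos hx0], by rwa [abs_neg, abs_of_pos hx0], ?_⟩
    rw [hl] at hx
    linear_combination hx

theorem annulus_roots_on_circle_iff (hq : 1 < q) (hl : |l| ≤ q + 1) :
    (∀ u : ℂ, 1 / q < ‖u‖ → ‖u‖ < 1 → 1 + q * u ^ 2 - u * l = 0 → ‖u‖ = 1 / √q) ↔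
      (|l| ≠ q + 1 → |l| ≤ 2 * √q) := by
  have hq0 : 0 < q := by linarith
  have hq_sqrt : 1 / q < 1 / √q :=
    one_div_lt_one_div_of_lt (Real.sqrt_pos.2 hq0) (Real.sqrt_lt_self_iff.2 hq)
  constructor
  · intro H hne
    by_contra! hgt
    obtain ⟨x, hx₁, hx₂, hx⟩ := exists_root_of_two_sqrt_lt_abs hq hgt (lt_of_le_of_ne hl hne)
    have hnorm : ‖(x : ℂ)‖ = |x| := by rw [norm_real, Real.norm_eq_abs]
    have := H x (by linarith) (by linarith) (by exact_mod_cast hx)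
    linarith
  · intro H u h₁ h₂ hu
    by_cases hl : |l| = q + 1
    · rcases norm_eq_one_or_inv_of_root_of_abs_eq hq0 hl hu with h | h <;> linarith
    · exact norm_eq_inv_sqrt_of_root_of_abs_le hq0 (H hl) hu

end IharaQuadratic

/-- Stark–Terras: for a finite `(q+1)`-regular graph with adjacency matrix `A`
and eigenvalues `λ_j`, the graph theory Riemann hypothesis — every `u` with `1/q < |u| < 1`
and `det((1+qu²)I - uA) = 0` satisfies `|u| = 1/√q` — is equivalent to the Ramanujan
property: every eigenvalue with `|λ_j| ≠ q+1` satisfies `|λ_j| ≤ 2√q`. -/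
theorem stark_terras_GTRH_iff_ramanujan
    (n d : ℕ) (G : SimpleGraph (Fin n)) [DecidableRel G.Adj]
    (hreg : G.IsRegularOfDegree d)
    (q : ℝ) (hq : 1 < q) (hd : (d : ℝ) = q + 1)
    (hA : (G.adjMatrix ℝ).IsHermitian) :
    (∀ u : ℂ, 1 / q < ‖u‖ → ‖u‖ < 1 →
        ((1 + (q : ℂ) * u ^ 2) • (1 : Matrix (Fin n) (Fin n) ℂ)
            - u • (G.adjMatrix ℝ).map (fun x : ℝ => (x : ℂ))).det = 0 →
        ‖u‖ = 1 / Real.sqrt q)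
      ↔
    (∀ j : Fin n, |hA.eigenvalues j| ≠ q + 1 → |hA.eigenvalues j| ≤ 2 * Real.sqrt q) := by
  have hfactor j := annulus_roots_on_circle_iff hq
    (hd ▸ G.abs_eigenvalue_le_of_isRegularOfDegree hreg hA j)
  simp_rw [hA.det_smul_one_sub_smul_map_ofReal]
  constructor
  · intro H j
    exact (hfactor j).1 fun u h₁ h₂ hu => H u h₁ h₂ (Finset.prod_eq_zero (Finset.mem_univ j) hu)
  · intro H u h₁ h₂ hdet
    obtain ⟨j, -, hj⟩ := Finset.prod_eq_zero_iff.1 hdet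
    exact (hfactor j).2 (H j) u h₁ h₂ hj
end

section
/- Let $q > 1$ and $\lambda \in \mathbb{R}$ with $2\sqrt{q} < |\lambda| < q+1$. Then the quadratic polynomial $qu^2 - \lambda u + 1$ has a real root $u$ satisfying $1/q < |u| < 1$ and $|u| \ne 1/\sqrt{q}$. -/
/-- if `q > 1` and `λ ∈ ℝ` with `2√q < |λ| < q+1`, then `qu² - λu + 1` has a
real root `u` with `1/q < |u| < 1` and `|u| ≠ 1/√q`. -/
theorem root_in_annulus_of_large_eigenvalue
    (q lam : ℝ) (hq : 1 < q)
    (h1 : 2 * Real.sqrt q < |lam|) (h2 : |lam| < q + 1) :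
    ∃ u : ℝ, q * u ^ 2 - lam * u + 1 = 0 ∧
      1 / q < |u| ∧ |u| < 1 ∧ |u| ≠ 1 / Real.sqrt q := by
  have hq0 : (0:ℝ) < q := by linarith
  set L := |lam| with hLdef
  have hL0 : (0:ℝ) ≤ L := abs_nonneg _
  have hsq : Real.sqrt q ^ 2 = q := Real.sq_sqrt hq0.le
  have hsq0 : 0 < Real.sqrt q := Real.sqrt_pos.mpr hq0
  have hsq1 : 1 < Real.sqrt q := by nlinarith
  have hL2 : 2 < L := by nlinarith
  have hD : 0 < L^2 - 4*q := by nlinarith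
  set s := Real.sqrt (L^2 - 4*q) with hsdef
  have hs2 : s^2 = L^2 - 4*q := Real.sq_sqrt hD.le
  have hs0 : 0 ≤ s := Real.sqrt_nonneg _
  have hsltL2 : s < L - 2 := by
    have h := Real.sqrt_lt_sqrt hD.le (show L^2 - 4*q < (L-2)^2 by nlinarith)
    rwa [Real.sqrt_sq (by linarith)] at h
  have hsgt : L - 2*Real.sqrt q < s := by
    have h := Real.sqrt_lt_sqrt (sq_nonneg (L - 2*Real.sqrt q))
      (show (L - 2*Real.sqrt q)^2 < L^2 - 4*q by nlinarith)
    rwa [Real.sqrt_sq (by linarith)] at h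
  set v := (L - s) / (2*q) with hvdef
  have hv0 : 0 < v := by apply div_pos <;> linarith
  have hvroot : q * v^2 - L * v + 1 = 0 := by
    rw [hvdef]; field_simp; ring_nf; nlinarith [hs2]
  have hvlow : 1 / q < v := by
    rw [hvdef, div_lt_div_iff₀ hq0 (by linarith)]; nlinarith
  have hvhigh : v < 1 / Real.sqrt q := by
    rw [hvdef, div_lt_div_iff₀ (by linarith) hsq0]
    nlinarith
  refine ⟨if 0 ≤ lam then v else -v, ?_, ?_, ?_, ?_⟩
  · by_cases h : 0 ≤ lam
    · simp only [if_pos h]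
      have : L = lam := abs_of_nonneg h
      rw [← this]; exact hvroot
    · simp only [if_neg h]
      have : L = -lam := abs_of_neg (not_le.mp h)
      nlinarith [hvroot]
  all_goals
    have habs : |if 0 ≤ lam then v else -v| = v := by
      by_cases h : 0 ≤ lam
      · simp [h, abs_of_pos hv0]
      · simp [h, abs_of_pos hv0]
    rw [habs]
  · exact hvlow
  · have : 1 / Real.sqrt q < 1 := by
      rw [div_lt_one hsq0]; exact hsq1
    linarith
  · exact ne_of_lt hvhigh
end

section
/- Let $0 < b < a$ and for $x \in [0,a]$ define $\mathcal{D}(x)^2 = \min_{(s,t) \in \mathcal{E}(a,b)} \big((s-x)^2 + t^2\big)$, the squared distance from the point $(x,0)$ to the ellipse $\mathcal{E}(a,b)$. Set $x_0 = a(1 - b^2/a^2) = (a^2-b^2)/a$. Then $\mathcal{D}(x)^2 = b^2\big(1 - x^2/(a^2-b^2)\big)$ if $0 \le x \le x_0$, and $\mathcal{D}(x)^2 = (a-x)^2$ if $x_0 \le x \le a$. -/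
/-- for `0 < b < a` and `x ∈ [0,a]`, the squared distance from `(x,0)` to the
ellipse `(s/a)² + (t/b)² = 1` equals `b²(1 - x²/(a²-b²))` for `0 ≤ x ≤ x₀ = (a²-b²)/a`, and
equals `(a-x)²` for `x₀ ≤ x ≤ a`. -/
theorem dist_to_ellipse_sq
    (a b x : ℝ) (hb : 0 < b) (hba : b < a) (hx0 : 0 ≤ x) (hxa : x ≤ a) :
    (x ≤ (a ^ 2 - b ^ 2) / a →
      sInf {D : ℝ | ∃ s t : ℝ, (s / a) ^ 2 + (t / b) ^ 2 = 1 ∧ D = (s - x) ^ 2 + t ^ 2}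
        = b ^ 2 * (1 - x ^ 2 / (a ^ 2 - b ^ 2))) ∧
    ((a ^ 2 - b ^ 2) / a ≤ x →
      sInf {D : ℝ | ∃ s t : ℝ, (s / a) ^ 2 + (t / b) ^ 2 = 1 ∧ D = (s - x) ^ 2 + t ^ 2}
        = (a - x) ^ 2) := by
  have ha : (0:ℝ) < a := hb.trans hba
  have ha' : a ≠ 0 := ha.ne'
  have hb' : b ≠ 0 := hb.ne'
  have hab : (0:ℝ) < a ^ 2 - b ^ 2 := by nlinarith
  set S := {D : ℝ | ∃ s t : ℝ, (s / a) ^ 2 + (t / b) ^ 2 = 1 ∧ D = (s - x) ^ 2 + t ^ 2}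
    with hSdef
  -- polynomial form of the constraint
  have hpoly : ∀ s t : ℝ, (s / a) ^ 2 + (t / b) ^ 2 = 1 →
      b ^ 2 * s ^ 2 + a ^ 2 * t ^ 2 = a ^ 2 * b ^ 2 := by
    intro s t h
    field_simp at h
    nlinarith [h]
  constructor
  · intro hx
    have hax : a * x ≤ a ^ 2 - b ^ 2 := by
      rw [le_div_iff₀ ha] at hx; nlinarith [hx]
    -- the minimizing point
    set s₀ : ℝ := a ^ 2 * x / (a ^ 2 - b ^ 2) with hs₀
    have hs₀le : s₀ ≤ a := by
      rw [hs₀, div_le_iff₀ hab]; nlinarith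
    have hs₀0 : 0 ≤ s₀ := by positivity
    have hu : 0 ≤ 1 - (s₀ / a) ^ 2 := by
      have h1 : (s₀ / a) ≤ 1 := by rw [div_le_one ha]; exact hs₀le
      have h2 : 0 ≤ s₀ / a := by positivity
      nlinarith
    set t₀ : ℝ := b * Real.sqrt (1 - (s₀ / a) ^ 2) with ht₀
    have ht₀sq : t₀ ^ 2 = b ^ 2 * (1 - (s₀ / a) ^ 2) := by
      rw [ht₀, mul_pow, Real.sq_sqrt hu]
    have hmem : b ^ 2 * (1 - x ^ 2 / (a ^ 2 - b ^ 2)) ∈ S := by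
      refine ⟨s₀, t₀, ?_, ?_⟩
      · have : (t₀ / b) ^ 2 = 1 - (s₀ / a) ^ 2 := by
          rw [div_pow, ht₀sq]; field_simp
        rw [this]; ring
      · rw [ht₀sq, hs₀]
        field_simp <;> ring
    have hlb : ∀ y ∈ S, b ^ 2 * (1 - x ^ 2 / (a ^ 2 - b ^ 2)) ≤ y := by
      rintro y ⟨s, t, hst, rfl⟩
      have h1 := hpoly s t hst
      have heq : b ^ 2 * (1 - x ^ 2 / (a ^ 2 - b ^ 2))
          = b ^ 2 * ((a ^ 2 - b ^ 2) - x ^ 2) / (a ^ 2 - b ^ 2) := by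
        field_simp
      rw [heq, div_le_iff₀ hab]
      nlinarith [sq_nonneg ((a ^ 2 - b ^ 2) * s - a ^ 2 * x), h1, sq_nonneg t,
        sq_nonneg (s - x)]
    exact le_antisymm (csInf_le ⟨_, hlb⟩ hmem) (le_csInf ⟨_, hmem⟩ hlb)
  · intro hx
    have hax : a ^ 2 - b ^ 2 ≤ a * x := by
      rw [div_le_iff₀ ha] at hx; nlinarith [hx]
    have hmem : (a - x) ^ 2 ∈ S := by
      refine ⟨a, 0, ?_, by ring⟩
      rw [div_self ha']; norm_num
    have hlb : ∀ y ∈ S, (a - x) ^ 2 ≤ y := by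
      rintro y ⟨s, t, hst, rfl⟩
      have h1 := hpoly s t hst
      have hs2 : s ^ 2 ≤ a ^ 2 := by
        by_contra h
        push_neg at h
        nlinarith [mul_lt_mul_of_pos_left h (pow_pos hb 2),
          mul_nonneg (sq_nonneg a) (sq_nonneg t)]
      have hsle : s ≤ a := by
        by_contra h
        push_neg at h
        nlinarith [mul_pos (by linarith : (0:ℝ) < s - a) (by linarith : (0:ℝ) < s + a)]
      have hB : 0 ≤ 2 * a ^ 2 * x - (a ^ 2 - b ^ 2) * (s + a) := by nlinarith
      have hA : 0 ≤ a - s := by linarith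
      nlinarith [mul_nonneg hA hB, h1]
    exact le_antisymm (csInf_le ⟨_, hlb⟩ hmem) (le_csInf ⟨_, hmem⟩ hlb)
end

section
/- Let $0 < b < a$ and for $x \in [0,a]$ let $\mathcal{D}(x) \ge 0$ be the distance from the point $(x,0)$ to the ellipse $\mathcal{E}(a,b)$, i.e. $\mathcal{D}(x)^2 = \min_{(s,t) \in \mathcal{E}(a,b)}\big((s-x)^2+t^2\big)$. Then $\mathcal{D}$ is strictly decreasing on $[0,a]$; in particular, for every $s \in [0,a]$, $\min_{x \in [0,s]} \mathcal{D}(x) = \mathcal{D}(s)$. -/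
/-!
On the ellipse `t² = b² (1 - (s/a)²)` and `|s| ≤ a`, so the squared distance from `(x, 0)` is a
convex quadratic in `s ∈ [-a, a]` with vertex `a²x / (a² - b²)`. Minimising it gives the squared
distance in closed form: `b² - b²x² / (a² - b²)` while the vertex lies in `[-a, a]`, and `(a - x)²`
(attained at `(a, 0)`) once it leaves. Each branch is strictly decreasing on its piece of `[0, a]`
and the two agree where they meet, so the distance is strictly decreasing; the minimum over
`[0, s]` is then attained at `s`.
-/

open Set

def ellipseSqDists (a b x : ℝ) : Set ℝ :=
  {D : ℝ | ∃ s t : ℝ, (s / a) ^ 2 + (t / b) ^ 2 = 1 ∧ D = (s - x) ^ 2 + t ^ 2}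

noncomputable def ellipseDist (a b x : ℝ) : ℝ :=
  √(sInf (ellipseSqDists a b x))

lemma ellipseSqDists_eq_image {a b : ℝ} (ha : 0 < a) (hb : b ≠ 0) (x : ℝ) :
    ellipseSqDists a b x = (fun s => (s - x) ^ 2 + b ^ 2 * (1 - (s / a) ^ 2)) '' Icc (-a) a := by
  ext D
  constructor
  · rintro ⟨s, t, hst, rfl⟩
    have ht : t ^ 2 = b ^ 2 * (1 - (s / a) ^ 2) := by
      rw [← hst, div_pow]; field_simp; ring
    have hs : |s / a| ≤ 1 := by
      rw [← sq_le_one_iff_abs_le_one]; nlinarith [sq_nonneg (t / b)]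
    rw [abs_div, abs_of_pos ha, div_le_one ha, abs_le] at hs
    exact ⟨s, hs, by rw [ht]⟩
  · rintro ⟨s, hs, rfl⟩
    have h1 : 0 ≤ 1 - (s / a) ^ 2 := by
      rw [sub_nonneg, sq_le_one_iff_abs_le_one, abs_div, abs_of_pos ha, div_le_one ha]
      exact abs_le.2 hs
    refine ⟨s, b * √(1 - (s / a) ^ 2), ?_, ?_⟩
    · rw [mul_div_cancel_left₀ _ hb, Real.sq_sqrt h1]; ring
    · rw [mul_pow, Real.sq_sqrt h1]

/-- The nearest point of the ellipse to `(x, 0)` has abscissa `min (a²x / (a² - b²)) a`. -/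
noncomputable def ellipseSqDist (a b x : ℝ) : ℝ :=
  if a * x ≤ a ^ 2 - b ^ 2 then b ^ 2 - b ^ 2 * x ^ 2 / (a ^ 2 - b ^ 2) else (a - x) ^ 2

lemma isLeast_ellipseSqDist {a b x : ℝ} (hb : 0 < b) (hba : b < a) (hx : 0 ≤ x) :
    IsLeast (ellipseSqDists a b x) (ellipseSqDist a b x) := by
  have ha : 0 < a := hb.trans hba
  have hc : 0 < a ^ 2 - b ^ 2 := by nlinarith
  rw [ellipseSqDists_eq_image ha hb.ne']
  unfold ellipseSqDist
  split_ifs with hvertex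
  · have hq : ∀ s, (s - x) ^ 2 + b ^ 2 * (1 - (s / a) ^ 2)
        = b ^ 2 - b ^ 2 * x ^ 2 / (a ^ 2 - b ^ 2)
          + (a ^ 2 - b ^ 2) / a ^ 2 * (s - a ^ 2 * x / (a ^ 2 - b ^ 2)) ^ 2 := by
      intro s; field_simp; ring
    refine ⟨⟨a ^ 2 * x / (a ^ 2 - b ^ 2), ⟨?_, ?_⟩, by simp only [hq, sub_self]; ring⟩, ?_⟩
    · have : 0 ≤ a ^ 2 * x / (a ^ 2 - b ^ 2) := by positivity
      linarith
    · rw [div_le_iff₀ hc]; nlinarith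
    · rintro _ ⟨s, -, rfl⟩
      simp only [hq, le_add_iff_nonneg_right]
      positivity
  · have hq : ∀ s, (s - x) ^ 2 + b ^ 2 * (1 - (s / a) ^ 2)
        = (a - x) ^ 2 + (a - s) * (2 * a ^ 2 * x - (a ^ 2 - b ^ 2) * (s + a)) / a ^ 2 := by
      intro s; field_simp; ring
    refine ⟨⟨a, ⟨by linarith, le_rfl⟩, by simp only [hq]; ring⟩, ?_⟩
    rintro _ ⟨s, ⟨hs, hsa⟩, rfl⟩
    simp only [hq, le_add_iff_nonneg_right]
    apply div_nonneg _ (by positivity)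
    apply mul_nonneg (by linarith)
    nlinarith

lemma ellipseSqDist_nonneg {a b x : ℝ} (hb : 0 < b) (hba : b < a) (hx : 0 ≤ x) :
    0 ≤ ellipseSqDist a b x := by
  obtain ⟨s, t, -, hD⟩ := (isLeast_ellipseSqDist hb hba hx).1
  rw [hD]
  positivity

/-- Both branches equal `b⁴ / a²` at the switching point `x = (a² - b²) / a`. -/
lemma ellipseSqDist_of_le {a b x : ℝ} (hb : 0 < b) (hba : b < a) (hx : a ^ 2 - b ^ 2 ≤ a * x) :
    ellipseSqDist a b x = (a - x) ^ 2 := by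
  have ha : 0 < a := hb.trans hba
  unfold ellipseSqDist
  split_ifs with hvertex
  · have hx' : x = (a ^ 2 - b ^ 2) / a := by field_simp; linarith
    have hc : a ^ 2 - b ^ 2 ≠ 0 := by nlinarith
    subst hx'
    field_simp
    ring
  · rfl

lemma strictAntiOn_ellipseSqDist {a b : ℝ} (hb : 0 < b) (hba : b < a) :
    StrictAntiOn (ellipseSqDist a b) (Icc 0 a) := by
  have ha : 0 < a := hb.trans hba
  have hc : 0 < a ^ 2 - b ^ 2 := by nlinarith
  set x₀ := (a ^ 2 - b ^ 2) / a
  have hx₀ : a * x₀ = a ^ 2 - b ^ 2 := mul_div_cancel₀ _ ha.ne'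
  have hx₀a : x₀ ≤ a := by rw [div_le_iff₀ ha]; nlinarith
  rw [← Icc_union_Icc_eq_Icc (by positivity) hx₀a]
  refine StrictAntiOn.union ?_ ?_ (isGreatest_Icc (by positivity)) (isLeast_Icc hx₀a)
  · rintro x ⟨hx, hxx₀⟩ y ⟨hy, hyx₀⟩ hxy
    have h1 : a * x ≤ a ^ 2 - b ^ 2 := by nlinarith
    have h2 : a * y ≤ a ^ 2 - b ^ 2 := by nlinarith
    simp only [ellipseSqDist, if_pos h1, if_pos h2]
    gcongr
  · refine StrictAntiOn.congr ?_ fun x hx =>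
      (ellipseSqDist_of_le hb hba (by nlinarith [hx.1])).symm
    rintro x ⟨hx, -⟩ y ⟨-, hy⟩ hxy
    simp only
    nlinarith

lemma strictAntiOn_ellipseDist {a b : ℝ} (hb : 0 < b) (hba : b < a) :
    StrictAntiOn (ellipseDist a b) (Icc 0 a) := by
  intro x hx y hy hxy
  rw [ellipseDist, ellipseDist, (isLeast_ellipseSqDist hb hba hx.1).csInf_eq,
    (isLeast_ellipseSqDist hb hba hy.1).csInf_eq]
  exact Real.sqrt_lt_sqrt (ellipseSqDist_nonneg hb hba hy.1)
    (strictAntiOn_ellipseSqDist hb hba hx hy hxy)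

/-- for `0 < b < a`, the distance `𝒟(x)` from `(x,0)` to the ellipse
`(s/a)² + (t/b)² = 1` is strictly decreasing on `[0,a]`; in particular, for every
`s ∈ [0,a]`, `min_{x ∈ [0,s]} 𝒟(x) = 𝒟(s)`. -/
theorem dist_to_ellipse_strictAnti
    (a b : ℝ) (hb : 0 < b) (hba : b < a) :
    StrictAntiOn (fun x : ℝ =>
        Real.sqrt (sInf {D : ℝ | ∃ s t : ℝ,
          (s / a) ^ 2 + (t / b) ^ 2 = 1 ∧ D = (s - x) ^ 2 + t ^ 2}))
      (Set.Icc 0 a) ∧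
    ∀ s ∈ Set.Icc (0 : ℝ) a,
      sInf ((fun x : ℝ =>
          Real.sqrt (sInf {D : ℝ | ∃ u t : ℝ,
            (u / a) ^ 2 + (t / b) ^ 2 = 1 ∧ D = (u - x) ^ 2 + t ^ 2})) '' Set.Icc 0 s)
        = Real.sqrt (sInf {D : ℝ | ∃ u t : ℝ,
            (u / a) ^ 2 + (t / b) ^ 2 = 1 ∧ D = (u - s) ^ 2 + t ^ 2}) := by
  change StrictAntiOn (ellipseDist a b) (Icc 0 a) ∧
    ∀ s ∈ Icc 0 a, sInf (ellipseDist a b '' Icc 0 s) = ellipseDist a b s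
  have hD := strictAntiOn_ellipseDist hb hba
  exact ⟨hD, fun s hs => ((hD.antitoneOn.mono (Icc_subset_Icc_right hs.2)).map_isGreatest
    (isGreatest_Icc hs.1)).csInf_eq⟩
end

section
/- Let $0 \le \tau < 1$ and $r > 0$ with $r^2(1-\tau) > 1$, and set $\dot a = r(1-\tau) + 1/r$ and $\dot b = r(1-\tau) - 1/r > 0$. Let $c \ge 0$ satisfy $4(1-\tau)/\dot a \le c \le \dot a$. Then $\min_{\lambda \in [0,c]}\ \min_{\varphi \in [0,2\pi)} \big|\lambda - \gamma_\tau(re^{i\varphi})\big|^2 = \big(r(1-\tau) + 1/r - c\big)^2$, where $\gamma_\tau(z) = z(1-\tau) + 1/z$. -/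
/-!
On the circle of radius `r`, `γ_τ(r e^{iφ}) = a cos φ + i b sin φ` with `a = r(1-τ) + 1/r` and
`b = r(1-τ) - 1/r`, so the squared distance from `λ ∈ [0, c]` is `(λ - a cos φ)² + b² sin² φ`.
Since `a² - b² = 4(1-τ)`, the lower bound on `c` says `b² ≥ a(a-c)`, and the claim reduces to the
elementary inequality `(a-c)² ≤ (λ - a t)² + a(a-c)(1-t²)`, with equality at `λ = c`, `t = 1`.
-/

open Complex

lemma zhukovsky_exp_mul_I (τ r φ : ℝ) :
    (r : ℂ) * exp (I * φ) * (1 - τ) + 1 / ((r : ℂ) * exp (I * φ)) =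
      ((r * (1 - τ) + 1 / r) * Real.cos φ : ℝ) + ((r * (1 - τ) - 1 / r) * Real.sin φ : ℝ) * I := by
  have hinv : 1 / ((r : ℂ) * exp (I * φ)) = (r : ℂ)⁻¹ * exp ((-φ : ℝ) * I) := by
    rw [one_div, mul_inv, ← exp_neg]
    push_cast
    ring_nf
  rw [hinv, mul_comm I, exp_mul_I, exp_mul_I]
  push_cast [Real.cos_neg, Real.sin_neg, cos_neg, sin_neg]
  field_simp
  ring

lemma norm_sub_zhukovsky_sq (τ r l φ : ℝ) :
    ‖(l : ℂ) - ((r : ℂ) * exp (I * φ) * (1 - τ) + 1 / ((r : ℂ) * exp (I * φ)))‖ ^ 2 =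
      (l - (r * (1 - τ) + 1 / r) * Real.cos φ) ^ 2 + ((r * (1 - τ) - 1 / r) * Real.sin φ) ^ 2 := by
  rw [zhukovsky_exp_mul_I τ r φ, Complex.sq_norm, normSq_apply]
  simp only [sub_re, sub_im, add_re, add_im, ofReal_re, ofReal_im, mul_re, mul_im, I_re, I_im]
  ring

lemma sq_sub_le_sq_sub_mul_add_mul_one_sub_sq (a c l t : ℝ) (hca : c ≤ a) (hl0 : 0 ≤ l)
    (hlc : l ≤ c) :
    (a - c) ^ 2 ≤ (l - a * t) ^ 2 + a * (a - c) * (1 - t ^ 2) := by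
  have hc : 0 ≤ c := hl0.trans hlc
  have ha : 0 ≤ a := hc.trans hca
  rcases le_total t 0 with ht | ht
  · have : (a * t) ^ 2 ≤ (l - a * t) ^ 2 := by nlinarith [mul_nonpos_of_nonneg_of_nonpos ha ht]
    nlinarith [mul_nonneg hc (sq_nonneg t)]
  rcases le_total (a * t) c with hat | hat
  · have : a * t ^ 2 ≤ c := by nlinarith
    nlinarith [sq_nonneg (l - a * t)]
  · -- at `l = c` the difference is exactly `a c (1 - t)²`
    have : (c - a * t) ^ 2 ≤ (l - a * t) ^ 2 := by nlinarith
    nlinarith [mul_nonneg (mul_nonneg ha hc) (sq_nonneg (1 - t))]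

lemma sq_sub_le_dist_sq_ellipse (a b c l φ : ℝ) (hca : c ≤ a) (hab : a ^ 2 - b ^ 2 ≤ c * a)
    (hl0 : 0 ≤ l) (hlc : l ≤ c) :
    (a - c) ^ 2 ≤ (l - a * Real.cos φ) ^ 2 + (b * Real.sin φ) ^ 2 := by
  have hsin : Real.sin φ ^ 2 = 1 - Real.cos φ ^ 2 := Real.sin_sq φ
  calc (a - c) ^ 2
      ≤ (l - a * Real.cos φ) ^ 2 + a * (a - c) * (1 - Real.cos φ ^ 2) :=
        sq_sub_le_sq_sub_mul_add_mul_one_sub_sq a c l _ hca hl0 hlc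
    _ ≤ (l - a * Real.cos φ) ^ 2 + (b * Real.sin φ) ^ 2 := by
        rw [mul_pow, hsin]
        gcongr
        · nlinarith [Real.cos_sq_le_one φ]
        · linarith

theorem min_dist_sq_to_zhukovsky_ellipse_general
    (τ r c : ℝ) (hτ1 : τ < 1) (hr : 0 < r)
    (hc0 : 0 ≤ c)
    (hcl : 4 * (1 - τ) / (r * (1 - τ) + 1 / r) ≤ c)
    (hcu : c ≤ r * (1 - τ) + 1 / r) :
    sInf {D : ℝ | ∃ l φ : ℝ, l ∈ Set.Icc 0 c ∧ φ ∈ Set.Ico 0 (2 * Real.pi) ∧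
        D = ‖((l : ℂ) -
          (((r : ℂ) * Complex.exp (Complex.I * (φ : ℂ))) * (1 - (τ : ℂ))
            + 1 / ((r : ℂ) * Complex.exp (Complex.I * (φ : ℂ)))))‖ ^ 2}
      = (r * (1 - τ) + 1 / r - c) ^ 2 := by
  have hτ : 0 < 1 - τ := sub_pos.2 hτ1
  have ha : 0 < r * (1 - τ) + 1 / r := by positivity
  have hab : (r * (1 - τ) + 1 / r) ^ 2 - (r * (1 - τ) - 1 / r) ^ 2
      ≤ c * (r * (1 - τ) + 1 / r) := by
    have hdiff_sq : (r * (1 - τ) + 1 / r) ^ 2 - (r * (1 - τ) - 1 / r) ^ 2 = 4 * (1 - τ) := by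
      field_simp
      ring
    rwa [hdiff_sq, ← div_le_iff₀ ha]
  refine IsLeast.csInf_eq ⟨⟨c, 0, ⟨hc0, le_rfl⟩, ⟨le_rfl, Real.two_pi_pos⟩, ?_⟩, ?_⟩
  · rw [norm_sub_zhukovsky_sq τ r c 0]
    simp only [Real.cos_zero, Real.sin_zero, mul_one, mul_zero]
    ring
  · rintro D ⟨l, φ, ⟨hl0, hlc⟩, -, rfl⟩
    rw [norm_sub_zhukovsky_sq τ r l φ]
    exact sq_sub_le_dist_sq_ellipse _ _ c l φ hcu hab hl0 hlc

/-- for `0 ≤ τ < 1`, `r > 0` with `r²(1-τ) > 1`, half-axes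
`ȧ = r(1-τ) + 1/r`, `ḃ = r(1-τ) - 1/r > 0`, and `c ≥ 0` with `4(1-τ)/ȧ ≤ c ≤ ȧ`, the
minimum over `λ ∈ [0,c]` and `φ ∈ [0,2π)` of `|λ - γ_τ(re^{iφ})|²`, where
`γ_τ(z) = z(1-τ) + 1/z`, equals `(r(1-τ) + 1/r - c)²`. -/
theorem min_dist_sq_to_zhukovsky_ellipse
    (τ r c : ℝ) (hτ0 : 0 ≤ τ) (hτ1 : τ < 1) (hr : 0 < r)
    (hr2 : 1 < r ^ 2 * (1 - τ)) (hc0 : 0 ≤ c)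
    (hcl : 4 * (1 - τ) / (r * (1 - τ) + 1 / r) ≤ c)
    (hcu : c ≤ r * (1 - τ) + 1 / r) :
    sInf {D : ℝ | ∃ l φ : ℝ, l ∈ Set.Icc 0 c ∧ φ ∈ Set.Ico 0 (2 * Real.pi) ∧
        D = ‖((l : ℂ) -
          (((r : ℂ) * Complex.exp (Complex.I * (φ : ℂ))) * (1 - (τ : ℂ))
            + 1 / ((r : ℂ) * Complex.exp (Complex.I * (φ : ℂ)))))‖ ^ 2}
      = (r * (1 - τ) + 1 / r - c) ^ 2 :=
  min_dist_sq_to_zhukovsky_ellipse_general τ r c hτ1 hr hc0 hcl hcu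
end
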